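/- arXiv:2401.17057 — 2 statements merged into one kernel-verified Lean document; each statement's English description precedes it below -/
import Mathlib

section
/- For 0 < α < 1, the binary function k_α(p) = ((1-p)^α + p^α)^{1/α} is concave and strictly increasing on [0, 1/2]. -/
/-!
Concavity: `(x, y) ↦ (x ^ α + y ^ α) ^ (1 / α)` is positively homogeneous and, for `α ≤ 1`,
superadditive on the nonnegative quadrant (reverse Minkowski: Minkowski's inequality with exponent
`1 / α ≥ 1` applied to the `α`-th powers). Such a function is concave, and `k_α` is its composition
with the affine map `p ↦ (1 - p, p)`.

Monotonicity: for `x < y ≤ 1 / 2` the points `y` and `1 - y` are the two opposite convex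
combinations of `x` and `1 - x`, so strict concavity of `t ↦ t ^ α` gives
`(1 - x) ^ α + x ^ α < (1 - y) ^ α + y ^ α`, and `t ↦ t ^ (1 / α)` is strictly increasing.
-/

open Real Set

noncomputable def binaryRenyiNorm (α p : ℝ) : ℝ := ((1 - p) ^ α + p ^ α) ^ (1 / α)

section

variable {α : ℝ}

theorem rpow_add_rpow_rpow_one_div_add_le (hα0 : 0 < α) (hα1 : α ≤ 1) {x₁ y₁ x₂ y₂ : ℝ}
    (hx₁ : 0 ≤ x₁) (hy₁ : 0 ≤ y₁) (hx₂ : 0 ≤ x₂) (hy₂ : 0 ≤ y₂) :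
    (x₁ ^ α + y₁ ^ α) ^ (1 / α) + (x₂ ^ α + y₂ ^ α) ^ (1 / α) ≤
      ((x₁ + x₂) ^ α + (y₁ + y₂) ^ α) ^ (1 / α) := by
  have hp : 1 ≤ 1 / α := by rw [le_div_iff₀ hα0]; linarith
  have minkowski := Real.Lp_add_le_of_nonneg (Finset.univ : Finset (Fin 2))
    (f := ![x₁ ^ α, x₂ ^ α]) (g := ![y₁ ^ α, y₂ ^ α]) hp
    (by intro i _; fin_cases i <;> simp <;> positivity)
    (by intro i _; fin_cases i <;> simp <;> positivity)
  simp only [Fin.sum_univ_two, Matrix.cons_val_zero, Matrix.cons_val_one, one_div_one_div,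
    ← rpow_mul hx₁, ← rpow_mul hx₂, ← rpow_mul hy₁, ← rpow_mul hy₂,
    mul_one_div_cancel hα0.ne', rpow_one] at minkowski
  calc (x₁ ^ α + y₁ ^ α) ^ (1 / α) + (x₂ ^ α + y₂ ^ α) ^ (1 / α)
      = (((x₁ ^ α + y₁ ^ α) ^ (1 / α) + (x₂ ^ α + y₂ ^ α) ^ (1 / α)) ^ α) ^ (1 / α) := by
        rw [← rpow_mul (by positivity), mul_one_div_cancel hα0.ne', rpow_one]
    _ ≤ ((x₁ + x₂) ^ α + (y₁ + y₂) ^ α) ^ (1 / α) := by gcongr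

theorem mul_rpow_add_mul_rpow_rpow_one_div (hα0 : 0 < α) {c x y : ℝ} (hc : 0 ≤ c) (hx : 0 ≤ x)
    (hy : 0 ≤ y) :
    ((c * x) ^ α + (c * y) ^ α) ^ (1 / α) = c * (x ^ α + y ^ α) ^ (1 / α) := by
  rw [mul_rpow hc hx, mul_rpow hc hy, ← mul_add, mul_rpow (by positivity) (by positivity),
    ← rpow_mul hc, mul_one_div_cancel hα0.ne', rpow_one]

theorem concaveOn_binaryRenyiNorm (hα0 : 0 < α) (hα1 : α ≤ 1) :
    ConcaveOn ℝ (Icc 0 1) (binaryRenyiNorm α) := by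
  refine ⟨convex_Icc 0 1, ?_⟩
  rintro x ⟨hx0, hx1⟩ y ⟨hy0, hy1⟩ a b ha hb hab
  have hsub := rpow_add_rpow_rpow_one_div_add_le hα0 hα1 (mul_nonneg ha (sub_nonneg.2 hx1))
    (mul_nonneg ha hx0) (mul_nonneg hb (sub_nonneg.2 hy1)) (mul_nonneg hb hy0)
  rwa [mul_rpow_add_mul_rpow_rpow_one_div hα0 ha (sub_nonneg.2 hx1) hx0,
    mul_rpow_add_mul_rpow_rpow_one_div hα0 hb (sub_nonneg.2 hy1) hy0,
    show a * (1 - x) + b * (1 - y) = 1 - (a * x + b * y) by linear_combination hab] at hsub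

theorem StrictConcaveOn.strictMonoOn_one_sub_add {g : ℝ → ℝ}
    (hg : StrictConcaveOn ℝ (Icc 0 1) g) :
    StrictMonoOn (fun p => g (1 - p) + g p) (Icc 0 (1 / 2)) := by
  rintro x ⟨hx0, -⟩ y ⟨-, hy⟩ hxy
  have hd : 0 < 1 - 2 * x := by linarith
  obtain ⟨a, ha_def⟩ : ∃ a, a = (1 - x - y) / (1 - 2 * x) := ⟨_, rfl⟩
  obtain ⟨b, hb_def⟩ : ∃ b, b = (y - x) / (1 - 2 * x) := ⟨_, rfl⟩
  have ha : 0 < a := ha_def ▸ div_pos (by linarith) hd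
  have hb : 0 < b := hb_def ▸ div_pos (by linarith) hd
  have hab : a + b = 1 := by
    rw [ha_def, hb_def, ← add_div, div_eq_one_iff_eq hd.ne']
    ring
  have hx : x ∈ Icc (0 : ℝ) 1 := ⟨hx0, by linarith⟩
  have hx' : 1 - x ∈ Icc (0 : ℝ) 1 := ⟨by linarith, by linarith⟩
  have hne : x ≠ 1 - x := by linarith
  have hy_comb : a * x + b * (1 - x) = y := by
    rw [ha_def, hb_def, div_mul_eq_mul_div, div_mul_eq_mul_div, ← add_div, div_eq_iff hd.ne']
    ring
  have hy'_comb : b * x + a * (1 - x) = 1 - y := by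
    rw [ha_def, hb_def, div_mul_eq_mul_div, div_mul_eq_mul_div, ← add_div, div_eq_iff hd.ne']
    ring
  have h₁ := hg.2 hx hx' hne ha hb hab
  have h₂ := hg.2 hx hx' hne hb ha (by rw [add_comm, hab])
  simp only [smul_eq_mul, hy_comb, hy'_comb] at h₁ h₂
  show g (1 - x) + g x < g (1 - y) + g y
  linear_combination h₁ + h₂ - (g x + g (1 - x)) * hab

theorem strictMonoOn_binaryRenyiNorm (hα0 : 0 < α) (hα1 : α < 1) :
    StrictMonoOn (binaryRenyiNorm α) (Icc 0 (1 / 2)) := by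
  have hsum := ((strictConcaveOn_rpow hα0 hα1).subset Icc_subset_Ici_self
    (convex_Icc 0 1)).strictMonoOn_one_sub_add
  intro x hx y hy hxy
  exact rpow_lt_rpow (add_nonneg (rpow_nonneg (by linarith [hx.2]) α) (rpow_nonneg hx.1 α))
    (hsum hx hy hxy) (by positivity)

end

/-- For `0 < α < 1`, the binary Rényi norm `k_α(p) = ((1-p)^α + p^α)^{1/α}` is concave
and strictly increasing on `[0, 1/2]`. -/
theorem binary_renyi_norm_concave_mono (α : ℝ) (hα0 : 0 < α) (hα1 : α < 1) :
    ConcaveOn ℝ (Set.Icc (0 : ℝ) (1 / 2))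
        (fun p : ℝ => ((1 - p) ^ α + p ^ α) ^ (1 / α)) ∧
      StrictMonoOn (fun p : ℝ => ((1 - p) ^ α + p ^ α) ^ (1 / α))
        (Set.Icc (0 : ℝ) (1 / 2)) :=
  ⟨(concaveOn_binaryRenyiNorm hα0 hα1.le).subset (Icc_subset_Icc le_rfl (by norm_num))
      (convex_Icc 0 (1 / 2)),
    strictMonoOn_binaryRenyiNorm hα0 hα1⟩
end

section
/- First-order expansion: for the truncated geometric family q_γ(x) = c_γ γ^x on {1,...,M}, writing ΔG(γ) = (M+1)/2 - Σ i q_γ(i) and ΔH(γ) = log M - H(q_γ), one has ΔG(γ)² / ΔH(γ) → 2·Var_U / 1 as γ → 1⁻, where Var_U = (M²-1)/12 is the variance of the uniform distribution on {1,...,M}; that is, ΔG(γ) ~ sqrt((M²-1)/6 · ΔH(γ)) (with natural log). -/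
/-!
Put `θ = log γ`: then `q_γ` is the exponential tilt `q_θ(i) ∝ exp (θ i)` of the uniform
distribution on `{1, …, M}`. Along any such family the mean `μ(θ)` has derivative `Var_θ`, and
the entropy `H(θ) = log Z(θ) - θ μ(θ)` has derivative `-θ Var_θ`. L'Hôpital's rule therefore
turns `(μ(0) - μ(θ))² / (H(0) - H(θ))` into `2 (μ(θ) - μ(0)) / θ`, which tends to
`2 μ'(0) = 2 Var_0` as `θ → 0`.
-/

open Filter Topology Real Finset

noncomputable section

section Tilted

variable {ι : Type*} (s : Finset ι) (f : ι → ℝ)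

-- `tiltedMoment s f 0` is the partition function `Z(θ)`.
def tiltedMoment (k : ℕ) (θ : ℝ) : ℝ := ∑ i ∈ s, f i ^ k * exp (f i * θ)

def tiltedProb (θ : ℝ) (i : ι) : ℝ := exp (f i * θ) / tiltedMoment s f 0 θ

def tiltedMean (θ : ℝ) : ℝ := ∑ i ∈ s, f i * tiltedProb s f θ i

def tiltedVariance (θ : ℝ) : ℝ := ∑ i ∈ s, f i ^ 2 * tiltedProb s f θ i - tiltedMean s f θ ^ 2

def tiltedEntropy (θ : ℝ) : ℝ := -∑ i ∈ s, tiltedProb s f θ i * log (tiltedProb s f θ i)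

variable {s f}

lemma hasDerivAt_tiltedMoment (k : ℕ) (θ : ℝ) :
    HasDerivAt (tiltedMoment s f k) (tiltedMoment s f (k + 1) θ) θ :=
  HasDerivAt.fun_sum fun i _ =>
    (((hasDerivAt_id' θ).const_mul (f i)).exp.const_mul (f i ^ k)).congr_deriv (by ring)

lemma tiltedMoment_zero_pos (hs : s.Nonempty) (θ : ℝ) : 0 < tiltedMoment s f 0 θ := by
  simpa [tiltedMoment] using sum_pos (fun i _ => exp_pos (f i * θ)) hs

lemma tiltedMoment_at_zero (k : ℕ) : tiltedMoment s f k 0 = ∑ i ∈ s, f i ^ k := by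
  simp [tiltedMoment]

lemma sum_pow_mul_tiltedProb (k : ℕ) (θ : ℝ) :
    ∑ i ∈ s, f i ^ k * tiltedProb s f θ i = tiltedMoment s f k θ / tiltedMoment s f 0 θ := by
  simp only [tiltedProb, tiltedMoment, sum_div, mul_div_assoc]

lemma tiltedMean_eq (θ : ℝ) :
    tiltedMean s f θ = tiltedMoment s f 1 θ / tiltedMoment s f 0 θ := by
  simpa [tiltedMean] using sum_pow_mul_tiltedProb (s := s) (f := f) 1 θ

lemma tiltedVariance_eq (θ : ℝ) :
    tiltedVariance s f θ = tiltedMoment s f 2 θ / tiltedMoment s f 0 θ -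
      (tiltedMoment s f 1 θ / tiltedMoment s f 0 θ) ^ 2 := by
  rw [tiltedVariance, sum_pow_mul_tiltedProb, tiltedMean_eq]

lemma hasDerivAt_tiltedMean (hs : s.Nonempty) (θ : ℝ) :
    HasDerivAt (tiltedMean s f) (tiltedVariance s f θ) θ := by
  have hZ := (tiltedMoment_zero_pos (f := f) hs θ).ne'
  rw [funext tiltedMean_eq, tiltedVariance_eq]
  refine ((hasDerivAt_tiltedMoment 1 θ).div (hasDerivAt_tiltedMoment 0 θ) hZ).congr_deriv ?_
  field_simp

lemma sum_tiltedProb (hs : s.Nonempty) (θ : ℝ) : ∑ i ∈ s, tiltedProb s f θ i = 1 := by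
  simpa using (sum_pow_mul_tiltedProb (s := s) (f := f) 0 θ).trans
    (div_self (tiltedMoment_zero_pos hs θ).ne')

lemma tiltedEntropy_eq (hs : s.Nonempty) (θ : ℝ) :
    tiltedEntropy s f θ = log (tiltedMoment s f 0 θ) - θ * tiltedMean s f θ := by
  have hZ := (tiltedMoment_zero_pos (f := f) hs θ).ne'
  have hlog : ∀ i, log (tiltedProb s f θ i) = f i * θ - log (tiltedMoment s f 0 θ) := fun i => by
    rw [tiltedProb, log_div (exp_pos _).ne' hZ, log_exp]
  have hmean : ∑ i ∈ s, tiltedProb s f θ i * (f i * θ) = θ * tiltedMean s f θ := by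
    rw [tiltedMean, mul_sum]
    exact sum_congr rfl fun _ _ => by ring
  simp only [tiltedEntropy, hlog, mul_sub, sum_sub_distrib, ← sum_mul, sum_tiltedProb hs, hmean]
  ring

lemma hasDerivAt_tiltedEntropy (hs : s.Nonempty) (θ : ℝ) :
    HasDerivAt (tiltedEntropy s f) (-(θ * tiltedVariance s f θ)) θ := by
  have hZ := (tiltedMoment_zero_pos (f := f) hs θ).ne'
  rw [funext (tiltedEntropy_eq hs)]
  refine (((hasDerivAt_tiltedMoment 0 θ).log hZ).sub
    ((hasDerivAt_id' θ).mul (hasDerivAt_tiltedMean hs θ))).congr_deriv ?_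
  rw [tiltedMean_eq]
  ring

lemma continuous_tiltedVariance (hs : s.Nonempty) : Continuous (tiltedVariance s f) := by
  have hm (k : ℕ) : Continuous (tiltedMoment s f k) :=
    continuous_iff_continuousAt.2 fun θ => (hasDerivAt_tiltedMoment k θ).continuousAt
  have hZ := fun θ => (tiltedMoment_zero_pos (f := f) hs θ).ne'
  rw [funext tiltedVariance_eq]
  fun_prop (disch := exact hZ _)

lemma tiltedMean_at_zero : tiltedMean s f 0 = (∑ i ∈ s, f i) / #s := by
  simp [tiltedMean_eq, tiltedMoment_at_zero]

lemma tiltedVariance_at_zero :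
    tiltedVariance s f 0 = (∑ i ∈ s, f i ^ 2) / #s - ((∑ i ∈ s, f i) / #s) ^ 2 := by
  simp [tiltedVariance_eq, tiltedMoment_at_zero]

lemma tiltedEntropy_at_zero (hs : s.Nonempty) : tiltedEntropy s f 0 = log #s := by
  simp [tiltedEntropy_eq hs, tiltedMoment_at_zero]

lemma nonempty_of_tiltedVariance_ne_zero {θ : ℝ} (hvar : tiltedVariance s f θ ≠ 0) :
    s.Nonempty :=
  nonempty_iff_ne_empty.2 fun h => hvar (by simp [h, tiltedVariance, tiltedMean])

theorem tendsto_sq_sub_tiltedMean_div_sub_tiltedEntropy (hvar : tiltedVariance s f 0 ≠ 0) :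
    Tendsto (fun θ => (tiltedMean s f 0 - tiltedMean s f θ) ^ 2 /
        (tiltedEntropy s f 0 - tiltedEntropy s f θ)) (𝓝[≠] 0) (𝓝 (2 * tiltedVariance s f 0)) := by
  have hs := nonempty_of_tiltedVariance_ne_zero hvar
  have hvar_ne : ∀ᶠ θ in 𝓝[≠] 0, tiltedVariance s f θ ≠ 0 :=
    ((continuous_tiltedVariance hs).continuousAt.eventually_ne hvar).filter_mono nhdsWithin_le_nhds
  have hθ_ne : ∀ᶠ θ : ℝ in 𝓝[≠] 0, θ ≠ 0 := self_mem_nhdsWithin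
  have hslope : Tendsto (slope (tiltedMean s f) 0) (𝓝[≠] 0) (𝓝 (tiltedVariance s f 0)) :=
    hasDerivAt_iff_tendsto_slope.1 (hasDerivAt_tiltedMean hs 0)
  have hgap {g : ℝ → ℝ} {g' : ℝ} (hg : HasDerivAt g g' 0) :
      Tendsto (fun θ => g 0 - g θ) (𝓝[≠] 0) (𝓝 0) := by
    simpa using ((tendsto_const_nhds (x := g 0)).sub hg.continuousAt.tendsto).mono_left
      nhdsWithin_le_nhds
  refine HasDerivAt.lhopital_zero_nhdsNE
    (.of_forall fun θ => ((hasDerivAt_tiltedMean hs θ).const_sub _).pow 2)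
    (.of_forall fun θ => (hasDerivAt_tiltedEntropy hs θ).const_sub _) ?_
    (by simpa using (hgap (hasDerivAt_tiltedMean hs 0)).pow 2)
    (hgap (hasDerivAt_tiltedEntropy hs 0)) ?_
  · filter_upwards [hvar_ne, hθ_ne] with θ hv hθ
    simpa using mul_ne_zero hθ hv
  · refine (hslope.const_mul 2).congr' ?_
    filter_upwards [hvar_ne, hθ_ne] with θ hv hθ
    rw [slope_def_field]
    field_simp
    ring

end Tilted

lemma tiltedProb_natCast_log (s : Finset ℕ) {γ : ℝ} (hγ : 0 < γ) (i : ℕ) :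
    tiltedProb s (↑) (log γ) i = γ ^ i / ∑ j ∈ s, γ ^ j := by
  simp [tiltedProb, tiltedMoment, exp_nat_mul, exp_log hγ]

lemma sum_Icc_one_natCast (M : ℕ) : ∑ i ∈ Icc 1 M, (i : ℝ) = M * (M + 1) / 2 := by
  induction M with
  | zero => simp
  | succ n ih =>
    rw [sum_Icc_succ_top (by omega), ih]
    push_cast
    ring

lemma sum_Icc_one_natCast_sq (M : ℕ) :
    ∑ i ∈ Icc 1 M, (i : ℝ) ^ 2 = M * (M + 1) * (2 * M + 1) / 6 := by
  induction M with
  | zero => simp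
  | succ n ih =>
    rw [sum_Icc_succ_top (by omega), ih]
    push_cast
    ring

lemma tendsto_log_nhdsLT_one : Tendsto log (𝓝[<] 1) (𝓝[<] 0) := by
  refine tendsto_nhdsWithin_of_tendsto_nhds_of_eventually_within _ ?_ ?_
  · simpa using (continuousAt_log one_ne_zero).tendsto.mono_left nhdsWithin_le_nhds
  · filter_upwards [Ioo_mem_nhdsLT zero_lt_one] with γ hγ
    exact log_neg hγ.1 hγ.2

end

/-- First-order expansion for the truncated geometric family `q_γ(x) ∝ γ^x` on
`{1,...,M}`: with `ΔG(γ) = (M+1)/2 - ∑ i·q_γ(i)` and `ΔH(γ) = log M - H(q_γ)`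
(natural log), `ΔG(γ)²/ΔH(γ) → (M²-1)/6` as `γ → 1⁻`. -/
theorem first_order_expansion (M : ℕ) (hM : 2 ≤ M) :
    Tendsto (fun γ : ℝ =>
        (((M : ℝ) + 1) / 2 -
            ∑ i ∈ Finset.Icc 1 M, (i : ℝ) * (γ ^ i / ∑ j ∈ Finset.Icc 1 M, γ ^ j)) ^ 2 /
          (Real.log M -
            (-∑ i ∈ Finset.Icc 1 M, (γ ^ i / ∑ j ∈ Finset.Icc 1 M, γ ^ j) *
                Real.log (γ ^ i / ∑ j ∈ Finset.Icc 1 M, γ ^ j))))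
      (nhdsWithin 1 (Set.Iio 1)) (nhds (((M : ℝ) ^ 2 - 1) / 6)) := by
  have hM' : (2 : ℝ) ≤ M := by exact_mod_cast hM
  have hcard : (#(Icc 1 M) : ℝ) = M := by simp
  have hmean : tiltedMean (Icc 1 M) (↑) 0 = ((M : ℝ) + 1) / 2 := by
    rw [tiltedMean_at_zero, sum_Icc_one_natCast, hcard]
    field_simp
  have hvar : tiltedVariance (Icc 1 M) (↑) 0 = ((M : ℝ) ^ 2 - 1) / 12 := by
    rw [tiltedVariance_at_zero, sum_Icc_one_natCast, sum_Icc_one_natCast_sq, hcard]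
    field_simp
    ring
  have hentropy : tiltedEntropy (Icc 1 M) (↑) 0 = log M := by
    rw [tiltedEntropy_at_zero (nonempty_Icc.2 (by omega)), hcard]
  have hlim := (tendsto_sq_sub_tiltedMean_div_sub_tiltedEntropy (s := Icc 1 M) (f := (↑))
    (by rw [hvar]; nlinarith)).comp (tendsto_log_nhdsLT_one.mono_right (nhdsLT_le_nhdsNE 0))
  rw [hvar, hmean, hentropy, show 2 * (((M : ℝ) ^ 2 - 1) / 12) = ((M : ℝ) ^ 2 - 1) / 6 by ring]
    at hlim
  refine hlim.congr' ?_
  filter_upwards [Ioo_mem_nhdsLT zero_lt_one] with γ hγ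
  simp only [Function.comp_apply, tiltedMean, tiltedEntropy, tiltedProb_natCast_log _ hγ.1]
end
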